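/- Let H be a finite simple hypergraph with e-index k and unified matrix U(H) with largest eigenvalue λ₁(H). Then λ₁(H)² ≤ ((k−1)/k)·((Σ_{S ∈ I(H)} d_H(S)) − ∂(H)). -/

import Mathlib

variable {V : Type} [Fintype V] [DecidableEq V]

/-- A finite hypergraph: a finite vertex set and a multiset of nonempty edges. -/
structure Hypergraph' (V : Type) [Fintype V] [DecidableEq V] where
  verts : Finset V
  edges : Multiset (Finset V)
  edges_sub : ∀ e ∈ edges, e ⊆ verts
  edges_nonempty : ∀ e ∈ edges, e.Nonempty

open Classical in
/-- `IH H` is `I(H)`: all parts of 2-partitions of edges plus all singletons of `V(H)`. -/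
noncomputable def IH (H : Hypergraph' V) : Finset (Finset V) :=
  Finset.univ.filter fun S =>
    (S.Nonempty ∧ ∃ e ∈ H.edges, S ⊂ e) ∨ ∃ v ∈ H.verts, S = {v}

/-- The unified matrix of a hypergraph, indexed by `I(H)`. -/
noncomputable def U (H : Hypergraph' V) : Matrix ↥(IH H) ↥(IH H) ℝ := fun S T =>
  if (S : Finset V) = (T : Finset V) then
    (if (S : Finset V).card = 1 then (H.edges.count (S : Finset V) : ℝ) else 0)
  else if Disjoint (S : Finset V) (T : Finset V) then
    (H.edges.count ((S : Finset V) ∪ (T : Finset V)) : ℝ)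
  else 0

/-- Degree of a vertex: number of edges (with multiplicity) containing it. -/
def deg (H : Hypergraph' V) (v : V) : ℕ := (H.edges.filter (fun e => v ∈ e)).card

/-- Unified degree of a set `S`: number of edges (with multiplicity) containing `S`. -/
def udeg (H : Hypergraph' V) (S : Finset V) : ℕ := (H.edges.filter (fun e => S ⊆ e)).card

/-- `incl H` = ∂(H): number of edges of cardinality ≥ 2 properly contained in another edge. -/
noncomputable def incl (H : Hypergraph' V) : ℕ :=
  Multiset.card (H.edges.filter (fun e => 2 ≤ e.card ∧ ∃ e' ∈ H.edges, e ⊂ e'))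

/-- A hypergraph is simple if it has no multiple edges and no loops. -/
def Simple (H : Hypergraph' V) : Prop :=
  H.edges.Nodup ∧ ∀ e ∈ H.edges, 2 ≤ e.card

/-- `tau S` = τ(S): the set of unordered 2-partitions of `S`. -/
def tau (S : Finset V) : Finset (Finset (Finset V)) :=
  (S.powerset.filter fun A => A.Nonempty ∧ A ⊂ S).image fun A => {A, S \ A}

/-!
The diagonal of `U(H)` vanishes, so its eigenvalues sum to `0`; Cauchy–Schwarz applied to the
other `k - 1` eigenvalues then gives `k λ² ≤ (k - 1) Σ λⱼ² = (k - 1) tr U(H)²` for any eigenvalue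
`λ`. The trace `tr U(H)²` counts the ordered pairs `(S, T)` in `I(H)` whose disjoint union is an
edge. For fixed `S` these correspond, via `T ↦ S ∪ T`, to the edges strictly containing `S`,
which number `d_H(S) - [S ∈ E(H)]`; and the edges lying in `I(H)` are exactly those counted by
`∂(H)`.
-/

open Finset

theorem Matrix.IsHermitian.trace_mul_self_eq_sum_sq_eigenvalues {n 𝕜 : Type*} [Fintype n]
    [DecidableEq n] [RCLike 𝕜] {A : Matrix n n 𝕜} (hA : A.IsHermitian) :
    (A * A).trace = ∑ i, (hA.eigenvalues i : 𝕜) ^ 2 := by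
  conv_lhs => rw [hA.spectral_theorem, ← map_mul, Unitary.conjStarAlgAut_apply,
    Matrix.trace_mul_cycle, Unitary.coe_star_mul_self, one_mul, Matrix.diagonal_mul_diagonal,
    Matrix.trace_diagonal]
  simp [sq]

theorem sq_le_mul_sum_sq_of_sum_eq_zero {ι : Type*} [Fintype ι] {x : ι → ℝ}
    (hx : ∑ j, x j = 0) (i : ι) :
    x i ^ 2 ≤ ((Fintype.card ι - 1) / Fintype.card ι) * ∑ j, x j ^ 2 := by
  classical
  have hk : (0 : ℝ) < Fintype.card ι := by exact_mod_cast Fintype.card_pos_iff.mpr ⟨i⟩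
  have hrest : ∑ j ∈ univ.erase i, x j = -x i := by
    linarith [add_sum_erase univ x (mem_univ i)]
  have hrest_sq : ∑ j ∈ univ.erase i, x j ^ 2 = ∑ j, x j ^ 2 - x i ^ 2 := by
    linarith [add_sum_erase univ (fun j => x j ^ 2) (mem_univ i)]
  have hcard : ((univ.erase i).card : ℝ) = Fintype.card ι - 1 := by
    rw [card_erase_of_mem (mem_univ i), card_univ, Nat.cast_pred (by exact_mod_cast hk)]
  have hcs := sq_sum_le_card_mul_sum_sq (s := univ.erase i) (f := x)
  rw [hrest, neg_sq, hcard, hrest_sq] at hcs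
  rw [div_mul_eq_mul_div, le_div_iff₀ hk]
  linarith

theorem Matrix.IsHermitian.eigenvalues_sq_le_of_trace_eq_zero {n : Type*} [Fintype n]
    [DecidableEq n] {A : Matrix n n ℝ} (hA : A.IsHermitian) (h₀ : A.trace = 0) (i : n) :
    hA.eigenvalues i ^ 2 ≤ ((Fintype.card n - 1) / Fintype.card n) * (A * A).trace := by
  rw [hA.trace_mul_self_eq_sum_sq_eigenvalues]
  refine sq_le_mul_sum_sq_of_sum_eq_zero ?_ i
  simpa [hA.trace_eq_sum_eigenvalues] using h₀

namespace Hypergraph'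

variable {H : Hypergraph' V}

lemma mem_IH {S : Finset V} :
    S ∈ IH H ↔ (S.Nonempty ∧ ∃ e ∈ H.edges, S ⊂ e) ∨ ∃ v ∈ H.verts, S = {v} := by
  simp [IH]

lemma nonempty_of_mem_IH {S : Finset V} (hS : S ∈ IH H) : S.Nonempty := by
  rcases mem_IH.mp hS with ⟨hne, -⟩ | ⟨v, -, rfl⟩
  · exact hne
  · exact singleton_nonempty v

lemma udeg_eq_card_filter_ssubset_add_count (S : Finset V) :
    udeg H S = Multiset.card (H.edges.filter (S ⊂ ·)) + H.edges.count S := by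
  rw [udeg, Multiset.count_eq_card_filter_eq, ← Multiset.card_add, Multiset.filter_add_filter,
    (Multiset.filter_eq_nil (p := fun e => S ⊂ e ∧ S = e)).mpr fun e _ h => h.1.ne h.2,
    add_zero]
  simp only [subset_iff_ssubset_or_eq]

lemma mem_IH_iff_of_mem_edges (h₂ : ∀ e ∈ H.edges, 2 ≤ e.card) {e : Finset V}
    (he : e ∈ H.edges) : e ∈ IH H ↔ 2 ≤ e.card ∧ ∃ e' ∈ H.edges, e ⊂ e' := by
  rw [mem_IH]
  constructor
  · rintro (⟨-, hsup⟩ | ⟨v, -, rfl⟩)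
    · exact ⟨h₂ e he, hsup⟩
    · simpa using h₂ _ he
  · rintro ⟨hcard, hsup⟩
    exact Or.inl ⟨card_pos.mp (by omega), hsup⟩

lemma sum_count_IH_eq_incl (h₂ : ∀ e ∈ H.edges, 2 ≤ e.card) :
    ∑ S ∈ IH H, H.edges.count S = incl H := by
  calc ∑ S ∈ IH H, H.edges.count S
      = ∑ S ∈ IH H, (H.edges.filter (· ∈ IH H)).count S :=
        sum_congr rfl fun S hS => (Multiset.count_filter_of_pos hS).symm
    _ = Multiset.card (H.edges.filter (· ∈ IH H)) :=
        Multiset.sum_count_eq_card fun S hS => (Multiset.mem_filter.mp hS).2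
    _ = incl H := by
        rw [incl, Multiset.filter_congr fun e he => mem_IH_iff_of_mem_edges h₂ he]

lemma U_apply_of_simple (hs : Simple H) (S T : IH H) :
    U H S T =
      if (S : Finset V) ≠ T ∧ Disjoint (S : Finset V) T ∧ (S : Finset V) ∪ T ∈ H.edges
      then 1 else 0 := by
  have hsingle : ∀ e : Finset V, e.card = 1 → H.edges.count e = 0 := fun e he =>
    Multiset.count_eq_zero.mpr fun hmem => by have := hs.2 e hmem; omega
  unfold U
  by_cases hST : (S : Finset V) = T
  · simp +contextual [hST, hsingle]
  · by_cases hdisj : Disjoint (S : Finset V) T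
    · simp [hST, hdisj, Multiset.count_eq_of_nodup hs.1]
    · simp [hST, hdisj]

lemma U_mul_U_swap (hs : Simple H) (S T : IH H) :
    U H S T * U H T S =
      if (S : Finset V) ≠ T ∧ Disjoint (S : Finset V) T ∧ (S : Finset V) ∪ T ∈ H.edges
      then 1 else 0 := by
  rw [U_apply_of_simple hs S T, U_apply_of_simple hs T S]
  simp only [ne_comm, disjoint_comm, union_comm]
  split_ifs <;> norm_num

lemma card_filter_partners_eq {S : Finset V} (hS : S.Nonempty) :
    #((IH H).filter fun T => S ≠ T ∧ Disjoint S T ∧ S ∪ T ∈ H.edges) =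
      #(H.edges.toFinset.filter (S ⊂ ·)) := by
  refine card_nbij' (S ∪ ·) (· \ S) ?_ ?_ ?_ ?_
  · intro T hT
    simp only [coe_filter, Set.mem_ofPred_eq, Multiset.mem_toFinset] at hT ⊢
    obtain ⟨hT, -, hdisj, he⟩ := hT
    refine ⟨he, ssubset_of_subset_of_ne subset_union_left fun h => ?_⟩
    have hTS : T ⊆ S := h ▸ subset_union_right
    exact (nonempty_of_mem_IH hT).ne_empty (disjoint_self.mp (hdisj.symm.mono_right hTS))
  · intro e he
    simp only [coe_filter, Set.mem_ofPred_eq, Multiset.mem_toFinset] at he ⊢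
    obtain ⟨he, hSe⟩ := he
    have hrest : (e \ S).Nonempty := sdiff_nonempty.mpr hSe.not_subset
    refine ⟨mem_IH.mpr (Or.inl ⟨hrest, e, he, sdiff_ssubset hSe.subset hS⟩), ?_,
      disjoint_sdiff, by rwa [union_sdiff_of_subset hSe.subset]⟩
    exact fun h => hS.ne_empty (disjoint_self.mp (disjoint_sdiff.mono_right h.le))
  · intro T hT
    simp only [coe_filter, Set.mem_ofPred_eq] at hT
    exact union_sdiff_cancel_left hT.2.2.1
  · intro e he
    simp only [coe_filter, Set.mem_ofPred_eq] at he
    exact union_sdiff_of_subset he.2.subset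

lemma trace_U_mul_U (hs : Simple H) :
    (U H * U H).trace = ∑ S ∈ IH H, (udeg H S : ℝ) - incl H := by
  have hrow (S : IH H) : ∑ T : IH H, U H S T * U H T S =
      #((IH H).filter fun T => (S : Finset V) ≠ T ∧ Disjoint (S : Finset V) T ∧
        (S : Finset V) ∪ T ∈ H.edges) := by
    rw [card_filter, Nat.cast_sum, ← sum_coe_sort (IH H)]
    simp only [U_mul_U_swap hs S, Nat.cast_ite, Nat.cast_one, Nat.cast_zero]
  calc (U H * U H).trace = ∑ S : IH H, ∑ T : IH H, U H S T * U H T S := by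
        simp only [Matrix.trace, Matrix.diag_apply, Matrix.mul_apply]
    _ = ∑ S ∈ IH H, ((udeg H S : ℝ) - H.edges.count S) := by
        rw [← sum_coe_sort (IH H)]
        refine sum_congr rfl fun S _ => ?_
        rw [hrow, card_filter_partners_eq (nonempty_of_mem_IH S.2), ← Multiset.toFinset_filter,
          Multiset.toFinset_card_of_nodup (hs.1.filter _), udeg_eq_card_filter_ssubset_add_count]
        push_cast
        ring
    _ = ∑ S ∈ IH H, (udeg H S : ℝ) - incl H := by
        rw [sum_sub_distrib, ← sum_count_IH_eq_incl hs.2, Nat.cast_sum]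

lemma trace_U (hs : Simple H) : (U H).trace = 0 := by
  refine sum_eq_zero fun S _ => ?_
  simp [Matrix.diag_apply, U_apply_of_simple hs]

end Hypergraph'

theorem lambda_one_sq_le_general (H : Hypergraph' V) (hs : Simple H) (hU : (U H).IsHermitian)
    (i₀ : ↥(IH H)) :
    (hU.eigenvalues i₀) ^ 2 ≤
      (((Fintype.card ↥(IH H) : ℝ) - 1) / (Fintype.card ↥(IH H) : ℝ)) *
        ((∑ S ∈ IH H, (udeg H S : ℝ)) - (incl H : ℝ)) := by
  rw [← Hypergraph'.trace_U_mul_U hs]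
  exact hU.eigenvalues_sq_le_of_trace_eq_zero (Hypergraph'.trace_U hs) i₀

theorem lambda_one_sq_le (H : Hypergraph' V) (hs : Simple H) (hU : (U H).IsHermitian)
    (i₀ : ↥(IH H)) (hmax : ∀ i, hU.eigenvalues i ≤ hU.eigenvalues i₀) :
    (hU.eigenvalues i₀) ^ 2 ≤
      (((Fintype.card ↥(IH H) : ℝ) - 1) / (Fintype.card ↥(IH H) : ℝ)) *
        ((∑ S ∈ IH H, (udeg H S : ℝ)) - (incl H : ℝ)) :=
  lambda_one_sq_le_general H hs hU i₀
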